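/- arXiv:1910.03511 — 4 statements merged into one kernel-verified Lean document; each statement's English description precedes it below -/
import Mathlib

section
/- For any face F of 𝒜, the set {R region of 𝒜 : F ⊆ R} is a nonempty interval of the poset of regions PR(𝒜,B): there exist regions m_F and M_F with m_F ≤ M_F such that {R : F ⊆ R} = {R : m_F ≤ R ≤ M_F}. Moreover F equals the intersection of all regions R with m_F ≤ R ≤ M_F. -/
open scoped RealInnerProductSpace Pointwise

variable {V : Type*} [NormedAddCommGroup V] [InnerProductSpace ℝ V] [FiniteDimensional ℝ V]
  {ι : Type*} [Fintype ι]

/-- The (open) complement of the union of the hyperplanes with chosen normals `e i`. -/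
def arrComplement (e : ι → V) : Set V := {v | ∀ i, ⟪e i, v⟫ ≠ 0}

/-- A region of the arrangement: the closure of a connected component of the complement
of the union of the hyperplanes. -/
def IsRegion (e : ι → V) (R : Set V) : Prop :=
  ∃ x ∈ arrComplement e, R = closure (connectedComponentIn (arrComplement e) x)

/-- The positive closed half-space bounded by the hyperplane with normal `e i`. -/
def posHalf (e : ι → V) (i : ι) : Set V := {v | 0 ≤ ⟪e i, v⟫}

/-- The negative closed half-space bounded by the hyperplane with normal `e i`. -/
def negHalf (e : ι → V) (i : ι) : Set V := {v | ⟪e i, v⟫ ≤ 0}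

/-- The separation set of two regions: the (indices of) hyperplanes such that the two
regions lie in opposite closed half-spaces. -/
def sepSet (e : ι → V) (R R' : Set V) : Set ι :=
  {i | (R ⊆ posHalf e i ∧ R' ⊆ negHalf e i) ∨ (R ⊆ negHalf e i ∧ R' ⊆ posHalf e i)}

/-- The order of the poset of regions `PR(𝒜,B)`. -/
def PRle (e : ι → V) (B R R' : Set V) : Prop := sepSet e B R ⊆ sepSet e B R'

/-- Strict order of the poset of regions. -/
def PRlt (e : ι → V) (B R R' : Set V) : Prop := PRle e B R R' ∧ R ≠ R'

/-- Cover relation in the poset of regions. -/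
def PRcover (e : ι → V) (B R R' : Set V) : Prop :=
  PRlt e B R R' ∧ ¬ ∃ U, IsRegion e U ∧ PRlt e B R U ∧ PRlt e B U R'

/-- A face of the arrangement: an intersection of a nonempty collection of regions. -/
def IsFace (e : ι → V) (F : Set V) : Prop :=
  ∃ Rs : Set (Set V), Rs.Nonempty ∧ (∀ R ∈ Rs, IsRegion e R) ∧ F = ⋂₀ Rs

/-- `[m, M]` is the facial interval of the face `F` in the poset of regions:
the regions containing `F` are exactly those between `m` and `M`. -/
def IsFacialInterval (e : ι → V) (B F m M : Set V) : Prop :=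
  IsRegion e m ∧ IsRegion e M ∧
    ∀ R, IsRegion e R → (F ⊆ R ↔ (PRle e B m R ∧ PRle e B R M))

/-- The facial weak order `FW(𝒜,B)`: `F ≤ G` iff `m_F ≤ m_G` and `M_F ≤ M_G`
in the poset of regions. -/
def FWle (e : ι → V) (B F G : Set V) : Prop :=
  ∃ mF MF mG MG, IsFacialInterval e B F mF MF ∧ IsFacialInterval e B G mG MG ∧
    PRle e B mF mG ∧ PRle e B MF MG

/-- Strict facial weak order. -/
def FWlt (e : ι → V) (B F G : Set V) : Prop := FWle e B F G ∧ F ≠ G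

/-- Cover relation in the facial weak order. -/
def FWcover (e : ι → V) (B F G : Set V) : Prop :=
  FWlt e B F G ∧ ¬ ∃ X, IsFace e X ∧ FWlt e B F X ∧ FWlt e B X G

/-- Two faces have the same maximal region `M` of their facial intervals. -/
def SameMax (e : ι → V) (B F G : Set V) : Prop :=
  ∃ m m' M, IsFacialInterval e B F m M ∧ IsFacialInterval e B G m' M

/-- Two faces have the same minimal region `m` of their facial intervals. -/
def SameMin (e : ι → V) (B F G : Set V) : Prop :=
  ∃ m M M', IsFacialInterval e B F m M ∧ IsFacialInterval e B G m M'

/-- The dimension of a face: the dimension of its linear span. -/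
noncomputable def fdim (F : Set V) : ℕ := Module.finrank ℝ (Submodule.span ℝ F)

open Classical in
/-- The covector (sign vector) of a face: the sign of `⟪e i, x⟫` for `x` in the
relative interior of the face. -/
noncomputable def covec (e : ι → V) (F : Set V) (i : ι) : SignType :=
  if ∀ x ∈ intrinsicInterior ℝ F, 0 < ⟪e i, x⟫ then 1
  else if ∀ x ∈ intrinsicInterior ℝ F, ⟪e i, x⟫ < 0 then -1
  else 0

/-- Composition of sign vectors. -/
def scomp (f g : ι → SignType) (i : ι) : SignType := if f i ≠ 0 then f i else g i

/-- The set of roots of the arrangement: the chosen normals and their opposites. -/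
def roots (e : ι → V) : Set V := Set.range e ∪ Set.range (fun i => -(e i))

/-- The root inversion set of a face. -/
def rootInv (e : ι → V) (F : Set V) : Set V :=
  {v ∈ roots e | ∃ x ∈ intrinsicInterior ℝ F, ⟪x, v⟫ ≤ 0}

/-- `H i` is a wall of the region `R`. -/
noncomputable def IsWall (e : ι → V) (R : Set V) (i : ι) : Prop :=
  fdim ({v : V | ⟪e i, v⟫ = 0} ∩ R) = Module.finrank ℝ V - 1

/-- A region is simplicial when the normal vectors of its walls are linearly independent. -/
def IsSimplicialRegion (e : ι → V) (R : Set V) : Prop :=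
  LinearIndependent ℝ (fun i : {i : ι // IsWall e R i} => e i.1)

/-- The arrangement is simplicial when all its regions are. -/
def IsSimplicial (e : ι → V) : Prop := ∀ R, IsRegion e R → IsSimplicialRegion e R

/-- The arrangement is essential when the intersection of all its hyperplanes is `{0}`. -/
def IsEssential (e : ι → V) : Prop := (⋂ i, {v : V | ⟪e i, v⟫ = 0}) = ({0} : Set V)

/-- The poset of regions is a lattice: any two regions have a join and a meet. -/
def PRIsLattice (e : ι → V) (B : Set V) : Prop :=
  ∀ R R', IsRegion e R → IsRegion e R' →
    (∃ J, IsRegion e J ∧ PRle e B R J ∧ PRle e B R' J ∧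
      ∀ U, IsRegion e U → PRle e B R U → PRle e B R' U → PRle e B J U) ∧
    (∃ M, IsRegion e M ∧ PRle e B M R ∧ PRle e B M R' ∧
      ∀ U, IsRegion e U → PRle e B U R → PRle e B U R' → PRle e B U M)

/-!
Every region is the closed cell `{v | ∀ i, 0 ≤ ⟪e i, x⟫ * ⟪e i, v⟫}` of a point `x` off the
hyperplanes. A face `F` is a convex cone, and summing one witness per hyperplane gives a point
`f ∈ F` lying only on the hyperplanes that contain all of `F`; a region contains `F` iff it
contains `f`, i.e. iff its signs agree with those of `f` wherever `⟪e i, f⟫ ≠ 0`. Pushing `f`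
slightly towards the base region, resp. away from it, gives the regions `m_F` and `M_F` whose
separation sets from `B` are `{i | ⟪e i, f⟫ < 0}` and `{i | ⟪e i, f⟫ ≤ 0}`: these are the least
and the largest separation sets compatible with the signs of `f`.
-/

section Cells

variable {E : Type*} [NormedAddCommGroup E] [InnerProductSpace ℝ E] {κ : Type*}

def openCell (e : κ → E) (x : E) : Set E := {v | ∀ i, 0 < ⟪e i, x⟫ * ⟪e i, v⟫}

def closedCell (e : κ → E) (x : E) : Set E := {v | ∀ i, 0 ≤ ⟪e i, x⟫ * ⟪e i, v⟫}

variable {e : κ → E} {x y : E}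

theorem openCell_subset_arrComplement (e : κ → E) (x : E) :
    openCell e x ⊆ arrComplement e := fun v hv i hi => by
  simpa [hi] using hv i

theorem mem_openCell_self (hx : x ∈ arrComplement e) : x ∈ openCell e x :=
  fun i => mul_self_pos.2 (hx i)

theorem mem_closedCell_self (e : κ → E) (x : E) : x ∈ closedCell e x :=
  fun _ => mul_self_nonneg _

theorem zero_mem_closedCell (e : κ → E) (x : E) : (0 : E) ∈ closedCell e x :=
  fun _ => by simp

theorem add_mem_closedCell {v w : E} (hv : v ∈ closedCell e x) (hw : w ∈ closedCell e x) :
    v + w ∈ closedCell e x := fun i => by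
  rw [inner_add_right, mul_add]
  exact add_nonneg (hv i) (hw i)

theorem continuous_inner_mul_inner (e : κ → E) (x : E) (i : κ) :
    Continuous fun v : E => ⟪e i, x⟫ * ⟪e i, v⟫ := by
  fun_prop

theorem convex_openCell (e : κ → E) (x : E) : Convex ℝ (openCell e x) := by
  intro v hv w hw s t hs ht hst i
  have hv := hv i
  have hw := hw i
  rw [inner_add_right, real_inner_smul_right, real_inner_smul_right]
  rw [mul_add, mul_left_comm, mul_left_comm _ t]
  rcases hs.lt_or_eq with hs | rfl
  · exact add_pos_of_pos_of_nonneg (mul_pos hs hv) (mul_nonneg ht hw.le)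
  · obtain rfl : t = 1 := by linarith
    simpa using hw

theorem isClosed_closedCell (e : κ → E) (x : E) : IsClosed (closedCell e x) := by
  simp only [closedCell, Set.ofPred_forall]
  exact isClosed_iInter fun i => isClosed_le continuous_const (continuous_inner_mul_inner e x i)

theorem openSegment_subset_openCell (hx : x ∈ arrComplement e) (hy : y ∈ closedCell e x) :
    openSegment ℝ x y ⊆ openCell e x := by
  rintro _ ⟨a, b, ha, hb, -, rfl⟩ i
  rw [inner_add_right, real_inner_smul_right, real_inner_smul_right, mul_add,
    mul_left_comm, mul_left_comm _ b]
  exact add_pos_of_pos_of_nonneg (mul_pos ha (mul_self_pos.2 (hx i))) (mul_nonneg hb.le (hy i))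

theorem closure_openCell (hx : x ∈ arrComplement e) : closure (openCell e x) = closedCell e x := by
  refine subset_antisymm (closure_minimal (fun v hv i => (hv i).le) (isClosed_closedCell e x))
    fun y hy => ?_
  exact closure_mono (openSegment_subset_openCell hx hy)
    (segment_subset_closure_openSegment (right_mem_segment ℝ x y))

theorem connectedComponentIn_arrComplement (hx : x ∈ arrComplement e) :
    connectedComponentIn (arrComplement e) x = openCell e x := by
  refine subset_antisymm (fun y hy i => ?_) ((convex_openCell e x).isPreconnected.subset_connectedComponentIn
    (mem_openCell_self hx) (openCell_subset_arrComplement e x))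
  by_contra! hle
  obtain ⟨z, hz, hz0⟩ := isPreconnected_connectedComponentIn.intermediate_value₂ hy
    (mem_connectedComponentIn hx) (continuous_inner_mul_inner e x i).continuousOn
    continuousOn_const hle (mul_self_pos.2 (hx i)).le
  exact connectedComponentIn_subset _ _ hz i ((mul_eq_zero.1 hz0).resolve_left (hx i))

theorem isRegion_iff {R : Set E} :
    IsRegion e R ↔ ∃ x ∈ arrComplement e, R = closedCell e x := by
  refine exists_congr fun x => and_congr_right fun hx => ?_
  rw [connectedComponentIn_arrComplement hx, closure_openCell hx]

theorem IsRegion.zero_mem {R : Set E} (hR : IsRegion e R) : (0 : E) ∈ R := by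
  obtain ⟨x, -, rfl⟩ := isRegion_iff.1 hR
  exact zero_mem_closedCell e x

theorem IsRegion.add_mem {R : Set E} (hR : IsRegion e R) {v w : E} (hv : v ∈ R) (hw : w ∈ R) :
    v + w ∈ R := by
  obtain ⟨x, -, rfl⟩ := isRegion_iff.1 hR
  exact add_mem_closedCell hv hw

theorem closedCell_subset_posHalf_iff (hx : x ∈ arrComplement e) (i : κ) :
    closedCell e x ⊆ posHalf e i ↔ 0 < ⟪e i, x⟫ :=
  ⟨fun h => (h (mem_closedCell_self e x)).lt_of_ne' (hx i),
    fun h _ hv => (mul_nonneg_iff_of_pos_left h).1 (hv i)⟩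

theorem closedCell_subset_negHalf_iff (hx : x ∈ arrComplement e) (i : κ) :
    closedCell e x ⊆ negHalf e i ↔ ⟪e i, x⟫ < 0 :=
  ⟨fun h => (h (mem_closedCell_self e x)).lt_of_ne (hx i),
    fun h _ hv => nonpos_of_mul_nonneg_right (hv i) h⟩

variable {b : E}

theorem sepSet_closedCell_of_pos (hb : ∀ i, 0 < ⟪e i, b⟫) (hx : x ∈ arrComplement e) :
    sepSet e (closedCell e b) (closedCell e x) = {i | ⟪e i, x⟫ < 0} := by
  have hb' : b ∈ arrComplement e := fun i => (hb i).ne'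
  ext i
  simp only [sepSet, Set.mem_ofPred_eq, closedCell_subset_posHalf_iff, closedCell_subset_negHalf_iff,
    hb, hb', hx, true_and]
  exact or_iff_left fun h => lt_asymm h.1 (hb i)

theorem prle_closedCell_iff (hb : ∀ i, 0 < ⟪e i, b⟫) (hx : x ∈ arrComplement e)
    (hy : y ∈ arrComplement e) :
    PRle e (closedCell e b) (closedCell e x) (closedCell e y) ↔
      ∀ i, ⟪e i, x⟫ < 0 → ⟪e i, y⟫ < 0 := by
  rw [PRle, sepSet_closedCell_of_pos hb hx, sepSet_closedCell_of_pos hb hy, Set.ofPred_subset_ofPred]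

end Cells

section Faces

open Filter Topology

variable {E : Type*} [NormedAddCommGroup E] [InnerProductSpace ℝ E] {κ : Type*} {e : κ → E}
  {x f : E}

theorem exists_generic_mem [Fintype κ] {F : Set E} (h0 : (0 : E) ∈ F)
    (hadd : ∀ a ∈ F, ∀ b ∈ F, a + b ∈ F) {x₀ : E} (hx₀ : x₀ ∈ arrComplement e)
    (hF : F ⊆ closedCell e x₀) :
    ∃ f ∈ F, ∀ i, ⟪e i, f⟫ = 0 → ∀ y ∈ F, ⟪e i, y⟫ = 0 := by
  have hwitness (i : κ) : ∃ g ∈ F, (∃ y ∈ F, ⟪e i, y⟫ ≠ 0) → ⟪e i, g⟫ ≠ 0 := by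
    by_cases h : ∃ y ∈ F, ⟪e i, y⟫ ≠ 0
    · obtain ⟨y, hy, hy0⟩ := h
      exact ⟨y, hy, fun _ => hy0⟩
    · exact ⟨0, h0, fun h' => absurd h' h⟩
  choose g hgF hg using hwitness
  refine ⟨∑ j, g j, Finset.sum_induction g (· ∈ F) (fun a b ha hb => hadd a ha b hb) h0
    fun j _ => hgF j, fun i hi => ?_⟩
  -- all summands lie on the side of `x₀`, so none of them can cancel another
  have hsum : ∑ j, ⟪e i, x₀⟫ * ⟪e i, g j⟫ = 0 := by
    rw [← Finset.mul_sum, ← inner_sum, hi, mul_zero]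
  have hgi := (Finset.sum_eq_zero_iff_of_nonneg fun j _ => hF (hgF j) i).1 hsum i
    (Finset.mem_univ i)
  by_contra! h
  exact hg i h ((mul_eq_zero.1 hgi).resolve_left (hx₀ i))

theorem subset_closedCell_iff_of_generic {F : Set E} {x₀ : E} (hx₀ : x₀ ∈ arrComplement e)
    (hF : F ⊆ closedCell e x₀) (hf : f ∈ F)
    (hgen : ∀ i, ⟪e i, f⟫ = 0 → ∀ y ∈ F, ⟪e i, y⟫ = 0) (hx : x ∈ arrComplement e) :
    F ⊆ closedCell e x ↔ f ∈ closedCell e x := by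
  refine ⟨fun h => h hf, fun hfx y hy i => ?_⟩
  by_cases hfi : ⟪e i, f⟫ = 0
  · rw [hgen i hfi y hy, mul_zero]
  have h₁ := hfx i
  have h₂ := hF hf i
  have h₃ := hF hy i
  rcases (hx i).lt_or_gt with ha | ha <;> rcases (hx₀ i).lt_or_gt with hc | hc <;>
    rcases Ne.lt_or_gt hfi with hu | hu <;> nlinarith

theorem mem_closedCell_iff (hx : x ∈ arrComplement e) :
    f ∈ closedCell e x ↔
      (∀ i, ⟪e i, f⟫ < 0 → ⟪e i, x⟫ < 0) ∧ ∀ i, ⟪e i, x⟫ < 0 → ⟪e i, f⟫ ≤ 0 := by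
  rw [← forall_and]
  refine forall_congr' fun i => ?_
  rcases (hx i).lt_or_gt with ha | ha
  · exact ⟨fun h => ⟨fun _ => ha, fun _ => by nlinarith⟩, fun h => by nlinarith [h.2 ha]⟩
  · refine ⟨fun h => ⟨fun hu => by nlinarith, fun h' => absurd h' (not_lt.2 ha.le)⟩,
      fun h => mul_nonneg ha.le (not_lt.1 fun hu => ?_)⟩
    exact absurd (h.1 hu) (not_lt.2 ha.le)

theorem exists_perturbation [Finite κ] (f : E) {c : E} (hc : c ∈ arrComplement e) :
    ∃ p ∈ arrComplement e, ∀ i, ⟪e i, p⟫ < 0 ↔ ⟪e i, f⟫ < 0 ∨ ⟪e i, f⟫ = 0 ∧ ⟪e i, c⟫ < 0 := by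
  have hev : ∀ᶠ ε in 𝓝[>] (0 : ℝ),
      0 < ε ∧ ∀ i, ⟪e i, f⟫ ≠ 0 → 0 < ⟪e i, f⟫ * ⟪e i, f + ε • c⟫ := by
    refine eventually_mem_nhdsWithin.and (eventually_all.2 fun i => ?_)
    by_cases hfi : ⟪e i, f⟫ = 0
    · exact .of_forall fun _ h => absurd hfi h
    have hlim : Tendsto (fun ε : ℝ => ⟪e i, f⟫ * ⟪e i, f + ε • c⟫) (𝓝[>] 0)
        (𝓝 (⟪e i, f⟫ * ⟪e i, f⟫)) :=
      (Continuous.tendsto' (by fun_prop) 0 _ (by simp)).mono_left nhdsWithin_le_nhds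
    exact (hlim.eventually (eventually_gt_nhds (mul_self_pos.2 hfi))).mono fun _ h _ => h
  obtain ⟨ε, hε, hpos⟩ := hev.exists
  have hp (i : κ) : ⟪e i, f + ε • c⟫ = ⟪e i, f⟫ + ε * ⟪e i, c⟫ := by
    rw [inner_add_right, real_inner_smul_right]
  refine ⟨f + ε • c, fun i => ?_, fun i => ?_⟩
  · rcases eq_or_ne ⟪e i, f⟫ 0 with hu | hu
    · rw [hp, hu, zero_add]
      exact mul_ne_zero hε.ne' (hc i)
    · exact right_ne_zero_of_mul (hpos i hu).ne'
  · rcases lt_trichotomy ⟪e i, f⟫ 0 with hu | hu | hu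
    · exact iff_of_true (by nlinarith [hpos i hu.ne]) (Or.inl hu)
    · rw [hp, hu, zero_add]
      simp only [lt_irrefl, false_or, true_and]
      exact ⟨fun h => by nlinarith, mul_neg_of_pos_of_neg hε⟩
    · exact iff_of_false (by nlinarith [hpos i hu.ne']) (by rintro (h | ⟨h, -⟩) <;> linarith)

variable {b : E}

theorem exists_mem_arrComplement_inner_neg_iff_neg [Finite κ] (hb : ∀ i, 0 < ⟪e i, b⟫)
    (f : E) : ∃ p ∈ arrComplement e, ∀ i, ⟪e i, p⟫ < 0 ↔ ⟪e i, f⟫ < 0 := by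
  obtain ⟨p, hp, hsign⟩ := exists_perturbation f (c := b) fun i => (hb i).ne'
  exact ⟨p, hp, fun i => by simp [hsign, not_lt.2 (hb i).le]⟩

theorem exists_mem_arrComplement_inner_neg_iff_nonpos [Finite κ] (hb : ∀ i, 0 < ⟪e i, b⟫)
    (f : E) : ∃ p ∈ arrComplement e, ∀ i, ⟪e i, p⟫ < 0 ↔ ⟪e i, f⟫ ≤ 0 := by
  obtain ⟨p, hp, hsign⟩ := exists_perturbation f (c := -b) fun i => by simpa using (hb i).ne'
  exact ⟨p, hp, fun i => by simp [hsign, hb i, le_iff_lt_or_eq]⟩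

end Faces

theorem stmt1_general (e : ι → V) (B : Set V)
    (hB : IsRegion e B) (hBpos : ∀ i, B ⊆ posHalf e i)
    (F : Set V) (hF : IsFace e F) :
    ∃ m M, IsRegion e m ∧ IsRegion e M ∧ PRle e B m M ∧
      (∀ R, IsRegion e R → (F ⊆ R ↔ (PRle e B m R ∧ PRle e B R M))) ∧
      F = ⋂₀ {R | IsRegion e R ∧ PRle e B m R ∧ PRle e B R M} := by
  obtain ⟨b, hb, rfl⟩ := isRegion_iff.1 hB
  have hbpos (i : ι) : 0 < ⟪e i, b⟫ := (closedCell_subset_posHalf_iff hb i).1 (hBpos i)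
  obtain ⟨Rs, ⟨R₀, hR₀⟩, hRs, rfl⟩ := hF
  obtain ⟨x₀, hx₀, rfl⟩ := isRegion_iff.1 (hRs R₀ hR₀)
  have hFx₀ : ⋂₀ Rs ⊆ closedCell e x₀ := Set.sInter_subset_of_mem hR₀
  obtain ⟨f, hf, hgen⟩ := exists_generic_mem (Set.mem_sInter.2 fun R hR => (hRs R hR).zero_mem)
    (fun v hv w hw => Set.mem_sInter.2 fun R hR => (hRs R hR).add_mem (hv R hR) (hw R hR))
    hx₀ hFx₀
  obtain ⟨m, hm, hmf⟩ := exists_mem_arrComplement_inner_neg_iff_neg hbpos f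
  obtain ⟨M, hM, hMf⟩ := exists_mem_arrComplement_inner_neg_iff_nonpos hbpos f
  have hchar (R : Set V) (hR : IsRegion e R) : ⋂₀ Rs ⊆ R ↔
      PRle e (closedCell e b) (closedCell e m) R ∧ PRle e (closedCell e b) R (closedCell e M) := by
    obtain ⟨x, hx, rfl⟩ := isRegion_iff.1 hR
    rw [subset_closedCell_iff_of_generic hx₀ hFx₀ hf hgen hx, mem_closedCell_iff hx,
      prle_closedCell_iff hbpos hm hx, prle_closedCell_iff hbpos hx hM]
    simp only [hmf, hMf]
  refine ⟨closedCell e m, closedCell e M, isRegion_iff.2 ⟨m, hm, rfl⟩, isRegion_iff.2 ⟨M, hM, rfl⟩,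
    (prle_closedCell_iff hbpos hm hM).2 fun i hi => (hMf i).2 ((hmf i).1 hi).le, hchar, ?_⟩
  exact subset_antisymm (Set.subset_sInter fun R hR => (hchar R hR.1).2 hR.2)
    (Set.sInter_subset_sInter fun R hR =>
      ⟨hRs R hR, (hchar R (hRs R hR)).1 (Set.sInter_subset_of_mem hR)⟩)

/-- For any face `F`, the regions containing `F` form a nonempty interval `[m_F, M_F]`
of the poset of regions, and `F` is the intersection of the regions of this interval. -/
theorem stmt1 (e : ι → V) (hne : ∀ i, e i ≠ 0) (B : Set V)
    (hB : IsRegion e B) (hBpos : ∀ i, B ⊆ posHalf e i)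
    (F : Set V) (hF : IsFace e F) :
    ∃ m M, IsRegion e m ∧ IsRegion e M ∧ PRle e B m M ∧
      (∀ R, IsRegion e R → (F ⊆ R ↔ (PRle e B m R ∧ PRle e B R M))) ∧
      F = ⋂₀ {R | IsRegion e R ∧ PRle e B m R ∧ PRle e B R M} :=
  stmt1_general e B hB hBpos F hF
end

section
/- For any two faces F, G of 𝒜: F ⊆ G if and only if [m_F, M_F] ⊇ [m_G, M_G], i.e. if and only if m_F ≤ m_G and M_G ≤ M_F in the poset of regions PR(𝒜,B). -/
open scoped RealInnerProductSpace Pointwise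

variable {V : Type*} [NormedAddCommGroup V] [InnerProductSpace ℝ V] [FiniteDimensional ℝ V]
  {ι : Type*} [Fintype ι]

/-!
A face `G` is the intersection of the regions containing it, so `F ⊆ G` exactly when every
region containing `G` contains `F`. Through the facial intervals this says
`[m_G, M_G] ⊆ [m_F, M_F]`, and since `m_G ≤ M_G` this inclusion of intervals amounts to
`m_F ≤ m_G` and `M_G ≤ M_F`.
-/

section

omit [FiniteDimensional ℝ V] [Fintype ι]

variable {e : ι → V} {B : Set V}

theorem PRle.refl (R : Set V) : PRle e B R R := subset_rfl

theorem PRle.trans {R R' R'' : Set V} (h : PRle e B R R') (h' : PRle e B R' R'') :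
    PRle e B R R'' :=
  Set.Subset.trans h h'

theorem IsFace.subset_iff_forall_region {F G : Set V} (hG : IsFace e G) :
    F ⊆ G ↔ ∀ R, IsRegion e R → G ⊆ R → F ⊆ R := by
  obtain ⟨Rs, -, hRs, rfl⟩ := hG
  refine ⟨fun hFG R _ hGR => hFG.trans hGR, fun h => ?_⟩
  exact Set.subset_sInter fun R hR => h R (hRs R hR) (Set.sInter_subset_of_mem hR)

namespace IsFacialInterval

variable {F m M R : Set V}

theorem subset_region_iff (hI : IsFacialInterval e B F m M) (hR : IsRegion e R) :
    F ⊆ R ↔ PRle e B m R ∧ PRle e B R M :=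
  hI.2.2 R hR

theorem min_le_max (hI : IsFacialInterval e B F m M) (hF : IsFace e F) : PRle e B m M := by
  obtain ⟨Rs, ⟨R, hR⟩, hRs, rfl⟩ := hF
  obtain ⟨hmR, hRM⟩ := (hI.subset_region_iff (hRs R hR)).mp (Set.sInter_subset_of_mem hR)
  exact hmR.trans hRM

theorem subset_min (hI : IsFacialInterval e B F m M) (hF : IsFace e F) : F ⊆ m :=
  (hI.subset_region_iff hI.1).mpr ⟨PRle.refl m, hI.min_le_max hF⟩

theorem subset_max (hI : IsFacialInterval e B F m M) (hF : IsFace e F) : F ⊆ M :=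
  (hI.subset_region_iff hI.2.1).mpr ⟨hI.min_le_max hF, PRle.refl M⟩

end IsFacialInterval

end

theorem stmt2_general (e : ι → V) (B : Set V)
    (F G mF MF mG MG : Set V) (hG : IsFace e G)
    (hFI : IsFacialInterval e B F mF MF) (hGI : IsFacialInterval e B G mG MG) :
    F ⊆ G ↔ (PRle e B mF mG ∧ PRle e B MG MF) := by
  rw [hG.subset_iff_forall_region]
  constructor
  · intro h
    exact ⟨((hFI.subset_region_iff hGI.1).mp (h mG hGI.1 (hGI.subset_min hG))).1,
      ((hFI.subset_region_iff hGI.2.1).mp (h MG hGI.2.1 (hGI.subset_max hG))).2⟩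
  · rintro ⟨hmin, hmax⟩ R hR hGR
    obtain ⟨hmGR, hRMG⟩ := (hGI.subset_region_iff hR).mp hGR
    exact (hFI.subset_region_iff hR).mpr ⟨hmin.trans hmGR, hRMG.trans hmax⟩

/-- `F ⊆ G` iff `[m_F, M_F] ⊇ [m_G, M_G]`, i.e. `m_F ≤ m_G` and `M_G ≤ M_F`. -/
theorem stmt2 (e : ι → V) (hne : ∀ i, e i ≠ 0) (B : Set V)
    (hB : IsRegion e B) (hBpos : ∀ i, B ⊆ posHalf e i)
    (F G mF MF mG MG : Set V) (hF : IsFace e F) (hG : IsFace e G)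
    (hFI : IsFacialInterval e B F mF MF) (hGI : IsFacialInterval e B G mG MG) :
    F ⊆ G ↔ (PRle e B mF mG ∧ PRle e B MG MF) :=
  stmt2_general e B F G mF MF mG MG hG hFI hGI
end

section
/- For any two faces F, G of 𝒜, any two of the following conditions imply the third: (1) F ⊆ G, (2) M_F = M_G, (3) F ≤ G in the facial weak order FW(𝒜,B). Dually, any two of the following imply the third: (1′) G ⊆ F, (2′) m_F = m_G, (3′) F ≤ G in FW(𝒜,B). -/
open scoped RealInnerProductSpace Pointwise

variable {V : Type*} [NormedAddCommGroup V] [InnerProductSpace ℝ V] [FiniteDimensional ℝ V]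
  {ι : Type*} [Fintype ι]

/-!
A region is the closure of the cone cut out by the signs of the `⟪e i, ·⟫` at any of its
interior points, and these signs are read off its separation set from `B`; so a region is
determined by its separation set and `PR(𝒜,B)` is antisymmetric. Since a face is the
intersection of the regions containing it, `F ⊆ G` holds iff the facial interval of `G` lies
inside that of `F`, i.e. `m_F ≤ m_G` and `M_G ≤ M_F`. Each of the six implications combines
this description of inclusion with antisymmetry.
-/

section

variable {V : Type*} [NormedAddCommGroup V] [InnerProductSpace ℝ V] {ι : Type*}
  {e : ι → V} {B F G R R' m M mF MF mG MG : Set V}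

theorem connectedComponentIn_arrComplement_s3 {x : V} (hx : x ∈ arrComplement e) :
    connectedComponentIn (arrComplement e) x = {v | ∀ i, 0 < ⟪e i, x⟫ * ⟪e i, v⟫} := by
  have hxC : ∀ i, 0 < ⟪e i, x⟫ * ⟪e i, x⟫ := fun i => mul_self_pos.mpr (hx i)
  refine subset_antisymm (fun v hv i => ?_) ?_
  · -- otherwise `⟪e i, ·⟫` changes sign on the component, hence vanishes somewhere on it
    by_contra! hneg
    obtain ⟨w, hw, hw0⟩ := isPreconnected_connectedComponentIn.intermediate_value hv
      (mem_connectedComponentIn hx)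
      (continuous_const.mul (continuous_const.inner continuous_id)).continuousOn
      ⟨hneg, (hxC i).le⟩
    exact mul_ne_zero (hx i) (connectedComponentIn_subset _ _ hw i) hw0
  · have hconv : Convex ℝ {v | ∀ i, 0 < ⟪e i, x⟫ * ⟪e i, v⟫} := by
      rw [Set.ofPred_forall]
      exact convex_iInter fun i => convex_halfSpace_gt (⟪e i, x⟫ • innerₛₗ ℝ (e i)).isLinear 0
    refine hconv.isPreconnected.subset_connectedComponentIn hxC fun v hv i h0 => ?_
    simpa [h0] using hv i

theorem closure_connectedComponentIn_arrComplement_subset_negHalf_iff {x : V}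
    (hx : x ∈ arrComplement e) (i : ι) :
    closure (connectedComponentIn (arrComplement e) x) ⊆ negHalf e i ↔ ⟪e i, x⟫ < 0 := by
  refine ⟨fun h => (h (subset_closure (mem_connectedComponentIn hx))).lt_of_ne (hx i),
    fun h => closure_minimal (fun v hv => ?_) (isClosed_le (continuous_const.inner continuous_id)
      continuous_const)⟩
  rw [connectedComponentIn_arrComplement_s3 hx] at hv
  exact (neg_of_mul_pos_right (hv i) h.le).le

theorem IsRegion.not_subset_negHalf_of_subset_posHalf (hR : IsRegion e R) {i : ι}
    (hpos : R ⊆ posHalf e i) : ¬ R ⊆ negHalf e i := by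
  obtain ⟨x, hx, rfl⟩ := hR
  intro hneg
  have hxR := subset_closure (mem_connectedComponentIn hx)
  exact hx i (le_antisymm (hneg hxR) (hpos hxR))

theorem mem_sepSet_iff_subset_negHalf (hB : IsRegion e B) (hBpos : ∀ i, B ⊆ posHalf e i)
    (i : ι) : i ∈ sepSet e B R ↔ R ⊆ negHalf e i := by
  refine ⟨?_, fun h => Or.inl ⟨hBpos i, h⟩⟩
  rintro (⟨-, h⟩ | ⟨h, -⟩)
  · exact h
  · exact absurd h (hB.not_subset_negHalf_of_subset_posHalf (hBpos i))

theorem IsRegion.eq_of_sepSet_eq (hB : IsRegion e B) (hBpos : ∀ i, B ⊆ posHalf e i)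
    (hR : IsRegion e R) (hR' : IsRegion e R') (hsep : sepSet e B R = sepSet e B R') :
    R = R' := by
  obtain ⟨x, hx, rfl⟩ := hR
  obtain ⟨x', hx', rfl⟩ := hR'
  have hsign : ∀ i, ⟪e i, x⟫ < 0 ↔ ⟪e i, x'⟫ < 0 := fun i => by
    rw [← closure_connectedComponentIn_arrComplement_subset_negHalf_iff hx,
      ← closure_connectedComponentIn_arrComplement_subset_negHalf_iff hx',
      ← mem_sepSet_iff_subset_negHalf hB hBpos, ← mem_sepSet_iff_subset_negHalf hB hBpos, hsep]
  have hx'mem : x' ∈ connectedComponentIn (arrComplement e) x := by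
    rw [connectedComponentIn_arrComplement_s3 hx]
    intro i
    rcases (hx i).lt_or_gt with h | h
    · exact mul_pos_of_neg_of_neg h ((hsign i).mp h)
    · exact mul_pos h ((hx' i).lt_or_gt.resolve_left fun h' => h.not_gt ((hsign i).mpr h'))
  rw [connectedComponentIn_eq hx'mem]

theorem PRle_antisymm (hB : IsRegion e B) (hBpos : ∀ i, B ⊆ posHalf e i)
    (hR : IsRegion e R) (hR' : IsRegion e R') (h : PRle e B R R') (h' : PRle e B R' R) :
    R = R' :=
  hB.eq_of_sepSet_eq hBpos hR hR' (h.antisymm h')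

theorem IsFacialInterval.PRle_min_max (hFI : IsFacialInterval e B F m M) (hF : IsFace e F) :
    PRle e B m M := by
  obtain ⟨Rs, ⟨R, hR⟩, hRs, rfl⟩ := hF
  obtain ⟨hmR, hRM⟩ := (hFI.2.2 R (hRs R hR)).mp (Set.sInter_subset_of_mem hR)
  exact hmR.trans hRM

theorem IsFacialInterval.subset_min_s3 (hFI : IsFacialInterval e B F m M) (hF : IsFace e F) :
    F ⊆ m :=
  (hFI.2.2 m hFI.1).mpr ⟨subset_rfl, hFI.PRle_min_max hF⟩

theorem IsFacialInterval.subset_max_s3 (hFI : IsFacialInterval e B F m M) (hF : IsFace e F) :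
    F ⊆ M :=
  (hFI.2.2 M hFI.2.1).mpr ⟨hFI.PRle_min_max hF, subset_rfl⟩

theorem IsFacialInterval.subset_iff (hFI : IsFacialInterval e B F mF MF)
    (hGI : IsFacialInterval e B G mG MG) (hG : IsFace e G) :
    F ⊆ G ↔ PRle e B mF mG ∧ PRle e B MG MF := by
  constructor
  · intro hFG
    exact ⟨((hFI.2.2 mG hGI.1).mp (hFG.trans (hGI.subset_min_s3 hG))).1,
      ((hFI.2.2 MG hGI.2.1).mp (hFG.trans (hGI.subset_max_s3 hG))).2⟩
  · rintro ⟨hm, hM⟩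
    obtain ⟨Rs, -, hRs, rfl⟩ := hG
    refine Set.subset_sInter fun R hR => ?_
    obtain ⟨hmR, hRM⟩ := (hGI.2.2 R (hRs R hR)).mp (Set.sInter_subset_of_mem hR)
    exact (hFI.2.2 R (hRs R hR)).mpr ⟨hm.trans hmR, hRM.trans hM⟩

end

theorem stmt3_general (e : ι → V) (B : Set V)
    (hB : IsRegion e B) (hBpos : ∀ i, B ⊆ posHalf e i)
    (F G mF MF mG MG : Set V) (hF : IsFace e F) (hG : IsFace e G)
    (hFI : IsFacialInterval e B F mF MF) (hGI : IsFacialInterval e B G mG MG) :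
    ((F ⊆ G ∧ (PRle e B mF mG ∧ PRle e B MF MG)) → MF = MG) ∧
    ((MF = MG ∧ (PRle e B mF mG ∧ PRle e B MF MG)) → F ⊆ G) ∧
    ((F ⊆ G ∧ MF = MG) → (PRle e B mF mG ∧ PRle e B MF MG)) ∧
    ((G ⊆ F ∧ (PRle e B mF mG ∧ PRle e B MF MG)) → mF = mG) ∧
    ((mF = mG ∧ (PRle e B mF mG ∧ PRle e B MF MG)) → G ⊆ F) ∧
    ((G ⊆ F ∧ mF = mG) → (PRle e B mF mG ∧ PRle e B MF MG)) := by
  have hFG := hFI.subset_iff hGI hG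
  have hGF := hGI.subset_iff hFI hF
  refine ⟨?_, ?_, ?_, ?_, ?_, ?_⟩
  · rintro ⟨hsub, -, hM⟩
    exact PRle_antisymm hB hBpos hFI.2.1 hGI.2.1 hM (hFG.mp hsub).2
  · rintro ⟨rfl, hm, -⟩
    exact hFG.mpr ⟨hm, subset_rfl⟩
  · rintro ⟨hsub, rfl⟩
    exact ⟨(hFG.mp hsub).1, subset_rfl⟩
  · rintro ⟨hsub, hm, -⟩
    exact PRle_antisymm hB hBpos hFI.1 hGI.1 hm (hGF.mp hsub).1
  · rintro ⟨rfl, -, hM⟩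
    exact hGF.mpr ⟨subset_rfl, hM⟩
  · rintro ⟨hsub, rfl⟩
    exact ⟨subset_rfl, (hGF.mp hsub).2⟩

/-- Any two of (1) `F ⊆ G`, (2) `M_F = M_G`, (3) `F ≤ G` in the facial weak order
imply the third; dually for `G ⊆ F` and `m_F = m_G`. -/
theorem stmt3 (e : ι → V) (hne : ∀ i, e i ≠ 0) (B : Set V)
    (hB : IsRegion e B) (hBpos : ∀ i, B ⊆ posHalf e i)
    (F G mF MF mG MG : Set V) (hF : IsFace e F) (hG : IsFace e G)
    (hFI : IsFacialInterval e B F mF MF) (hGI : IsFacialInterval e B G mG MG) :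
    ((F ⊆ G ∧ (PRle e B mF mG ∧ PRle e B MF MG)) → MF = MG) ∧
    ((MF = MG ∧ (PRle e B mF mG ∧ PRle e B MF MG)) → F ⊆ G) ∧
    ((F ⊆ G ∧ MF = MG) → (PRle e B mF mG ∧ PRle e B MF MG)) ∧
    ((G ⊆ F ∧ (PRle e B mF mG ∧ PRle e B MF MG)) → mF = mG) ∧
    ((mF = mG ∧ (PRle e B mF mG ∧ PRle e B MF MG)) → G ⊆ F) ∧
    ((G ⊆ F ∧ mF = mG) → (PRle e B mF mG ∧ PRle e B MF MG)) :=
  stmt3_general e B hB hBpos F G mF MF mG MG hF hG hFI hGI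
end

section
/- The map F ↦ −F = {−v : v ∈ F} is a self-duality of the facial weak order FW(𝒜,B): it is an involutive bijection from the set of faces of 𝒜 to itself, and for any two faces F, G one has F ≤ G in FW(𝒜,B) if and only if −G ≤ −F in FW(𝒜,B). -/
open scoped RealInnerProductSpace Pointwise

variable {V : Type*} [NormedAddCommGroup V] [InnerProductSpace ℝ V] [FiniteDimensional ℝ V]
  {ι : Type*} [Fintype ι]

/-!
Negation maps the complement of the arrangement to itself, hence regions to regions and faces to
faces. Since `B` lies on the positive side of every hyperplane, `S(-R)` is the complement of
`S(R)`, so `R ↦ -R` is an order-reversing involution of `PR(𝒜,B)`. It therefore sends the facial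
interval `[m_F, M_F]` to `[-M_F, -m_F]`, which reverses the facial weak order.
-/

section Negation

omit [FiniteDimensional ℝ V] [Fintype ι]

variable {e : ι → V}

@[simp]
lemma neg_arrComplement (e : ι → V) : -arrComplement e = arrComplement e := by
  ext v
  simp [arrComplement, inner_neg_right]

@[simp]
lemma neg_negHalf (e : ι → V) (i : ι) : -negHalf e i = posHalf e i := by
  ext v
  simp [negHalf, posHalf, inner_neg_right]

lemma IsRegion.neg {R : Set V} (hR : IsRegion e R) : IsRegion e (-R) := by
  obtain ⟨x, hx, rfl⟩ := hR
  have hneg : ∀ s : Set V, -s = Homeomorph.neg V '' s := fun s => Set.image_neg_eq_neg.symm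
  refine ⟨-x, by rwa [← Set.mem_neg, neg_arrComplement], ?_⟩
  rw [hneg, (Homeomorph.neg V).image_closure, (Homeomorph.neg V).image_connectedComponentIn hx,
    ← hneg, neg_arrComplement]
  rfl

lemma IsRegion.subset_posHalf_iff_not_subset_negHalf {R : Set V} (hR : IsRegion e R) (i : ι) :
    R ⊆ posHalf e i ↔ ¬ R ⊆ negHalf e i := by
  obtain ⟨x, hx, rfl⟩ := hR
  set C := connectedComponentIn (arrComplement e) x
  have hxR : x ∈ closure C := subset_closure (mem_connectedComponentIn hx)
  have hf : Continuous fun v : V => ⟪e i, v⟫ := continuous_const.inner continuous_id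
  -- `⟪e i, ·⟫` does not vanish on the preconnected set `C`, so it has constant sign there.
  have hsign : C ⊆ {v | 0 < ⟪e i, v⟫} ∨ C ⊆ {v | ⟪e i, v⟫ < 0} :=
    isPreconnected_connectedComponentIn.subset_or_subset (isOpen_lt continuous_const hf)
      (isOpen_lt hf continuous_const)
      (Set.disjoint_left.2 fun v (hpos : 0 < ⟪e i, v⟫) => hpos.not_gt)
      fun v hv => (connectedComponentIn_subset _ _ hv i).symm.lt_or_gt
  rcases hsign with hpos | hneg
  · have hsub : closure C ⊆ posHalf e i :=
      closure_minimal (fun v hv => show 0 ≤ ⟪e i, v⟫ from (hpos hv).le)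
        (isClosed_le continuous_const hf)
    have hx0 : 0 < ⟪e i, x⟫ := hpos (mem_connectedComponentIn hx)
    exact iff_of_true hsub fun h => (h hxR).not_gt hx0
  · have hsub : closure C ⊆ negHalf e i :=
      closure_minimal (fun v hv => show ⟪e i, v⟫ ≤ 0 from (hneg hv).le)
        (isClosed_le hf continuous_const)
    have hx0 : ⟪e i, x⟫ < 0 := hneg (mem_connectedComponentIn hx)
    exact iff_of_false (fun h => (h hxR).not_gt hx0) (not_not.2 hsub)

lemma IsFace.neg {F : Set V} (hF : IsFace e F) : IsFace e (-F) := by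
  obtain ⟨Rs, hRs, hreg, rfl⟩ := hF
  refine ⟨Neg.neg '' Rs, hRs.image _, ?_, ?_⟩
  · rintro _ ⟨R, hR, rfl⟩
    exact (hreg R hR).neg
  · ext v
    simp

variable {B : Set V} (hB : IsRegion e B) (hBpos : ∀ i, B ⊆ posHalf e i)
include hB hBpos

lemma mem_sepSet_iff {R : Set V} (i : ι) : i ∈ sepSet e B R ↔ R ⊆ negHalf e i := by
  have hBneg : ¬ B ⊆ negHalf e i := (hB.subset_posHalf_iff_not_subset_negHalf i).1 (hBpos i)
  simp only [sepSet, Set.mem_ofPred_eq, hBpos i, hBneg, true_and, false_and, or_false]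

lemma sepSet_neg {R : Set V} (hR : IsRegion e R) : sepSet e B (-R) = (sepSet e B R)ᶜ := by
  ext i
  rw [Set.mem_compl_iff, mem_sepSet_iff hB hBpos, mem_sepSet_iff hB hBpos, Set.neg_subset,
    neg_negHalf, hR.subset_posHalf_iff_not_subset_negHalf]

lemma PRle_neg_iff {R R' : Set V} (hR : IsRegion e R) (hR' : IsRegion e R') :
    PRle e B (-R') (-R) ↔ PRle e B R R' := by
  rw [PRle, PRle, sepSet_neg hB hBpos hR, sepSet_neg hB hBpos hR', Set.compl_subset_compl]

lemma IsFacialInterval.neg {F m M : Set V} (h : IsFacialInterval e B F m M) :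
    IsFacialInterval e B (-F) (-M) (-m) := by
  obtain ⟨hm, hM, hmem⟩ := h
  refine ⟨hM.neg, hm.neg, fun R hR => ?_⟩
  rw [Set.neg_subset, hmem (-R) hR.neg, ← neg_neg R, PRle_neg_iff hB hBpos hm hR.neg,
    PRle_neg_iff hB hBpos hR.neg hM, neg_neg, and_comm]

lemma FWle.neg {F G : Set V} (h : FWle e B F G) : FWle e B (-G) (-F) := by
  obtain ⟨mF, MF, mG, MG, hF, hG, hm, hM⟩ := h
  exact ⟨-MG, -mG, -MF, -mF, hG.neg hB hBpos, hF.neg hB hBpos,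
    (PRle_neg_iff hB hBpos hF.2.1 hG.2.1).2 hM, (PRle_neg_iff hB hBpos hF.1 hG.1).2 hm⟩

end Negation

theorem stmt17_general (e : ι → V) (B : Set V)
    (hB : IsRegion e B) (hBpos : ∀ i, B ⊆ posHalf e i) :
    (∀ F, IsFace e F → IsFace e (-F)) ∧
    (∀ F : Set V, -(-F) = F) ∧
    (∀ F G, IsFace e F → IsFace e G → (FWle e B F G ↔ FWle e B (-G) (-F))) := by
  refine ⟨fun F hF => hF.neg, neg_neg, fun F G _ _ => ⟨FWle.neg hB hBpos, fun h => ?_⟩⟩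
  simpa only [neg_neg] using h.neg hB hBpos

/-- The map `F ↦ -F` is a self-duality of the facial weak order. -/
theorem stmt17 (e : ι → V) (hne : ∀ i, e i ≠ 0) (B : Set V)
    (hB : IsRegion e B) (hBpos : ∀ i, B ⊆ posHalf e i) :
    (∀ F, IsFace e F → IsFace e (-F)) ∧
    (∀ F : Set V, -(-F) = F) ∧
    (∀ F G, IsFace e F → IsFace e G → (FWle e B F G ↔ FWle e B (-G) (-F))) :=
  stmt17_general e B hB hBpos
end
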